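/- arXiv:2408.08721 — 6 statements merged into one kernel-verified Lean document; each statement's English description precedes it below -/
import Mathlib

section
/- Let (A,k,q,s,p) be a retraction point from X to B. For all x,x' ∈ X and b,b' ∈ B, q((k(x)+s(b))+(k(x')+s(b'))) = q(k(w)+s(b+b')), where u = q(k(x)+s(b)), v = q(k(x')+s(b')) and w = q((k(u)+s(b))+(k(v)+s(b'))). -/
theorem stmt4
    {A B X : Type}
    (addA : A → A → A) (zA : A)
    (addB : B → B → B) (zB : B)
    (hA1 : ∀ a, addA a zA = a) (hA2 : ∀ a, addA zA a = a)
    (hB1 : ∀ b, addB b zB = b) (hB2 : ∀ b, addB zB b = b)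
    (p : A → B) (s : B → A) (k : X → A) (q : A → X)
    (hp0 : p zA = zB) (hpadd : ∀ a a', p (addA a a') = addB (p a) (p a'))
    (hs0 : s zB = zA) (hsadd : ∀ b b', s (addB b b') = addA (s b) (s b'))
    (hps : ∀ b, p (s b) = b)
    (hqk : ∀ x, q (k x) = x)
    (hpk : ∀ x, p (k x) = zB)
    (hqs : ∀ b, q (s b) = q zA)
    (hsemi : ∀ a, addA (k (q a)) (s (p a)) = a)
    : ∀ (x x' : X) (b b' : B),
      q (addA (addA (k x) (s b)) (addA (k x') (s b'))) =
      q (addA (k (q (addA (addA (k (q (addA (k x) (s b)))) (s b))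
          (addA (k (q (addA (k x') (s b')))) (s b'))))) (s (addB b b'))) := by
  intro x x' b b'
  have key : ∀ y : X, ∀ c : B, addA (k (q (addA (k y) (s c)))) (s c) = addA (k y) (s c) := by
    intro y c
    have h := hsemi (addA (k y) (s c))
    rwa [hpadd, hpk, hps, hB2] at h
  rw [key x b, key x' b']
  have h := hsemi (addA (addA (k x) (s b)) (addA (k x') (s b')))
  rw [hpadd, hpadd, hpadd, hpk, hpk, hps, hps, hB2, hB2] at h
  rw [h]
end

section
/- Let (A,k,q,s,p) be a retraction point from X to B, Z a unitary magma, u: X → Z a map with u(q(0)) = 0, and v: B → Z a magma morphism. There exists a magma morphism w: A → Z with wk = u and ws = v if and only if u(q(a+a')) + v(p(a+a')) = (u(q(a))+v(p(a))) + (u(q(a'))+v(p(a'))) for all a, a' ∈ A. -/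
theorem stmt8
    {A B X : Type}
    (addA : A → A → A) (zA : A)
    (addB : B → B → B) (zB : B)
    (hA1 : ∀ a, addA a zA = a) (hA2 : ∀ a, addA zA a = a)
    (hB1 : ∀ b, addB b zB = b) (hB2 : ∀ b, addB zB b = b)
    (p : A → B) (s : B → A) (k : X → A) (q : A → X)
    (hp0 : p zA = zB) (hpadd : ∀ a a', p (addA a a') = addB (p a) (p a'))
    (hs0 : s zB = zA) (hsadd : ∀ b b', s (addB b b') = addA (s b) (s b'))
    (hps : ∀ b, p (s b) = b)
    (hqk : ∀ x, q (k x) = x)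
    (hpk : ∀ x, p (k x) = zB)
    (hqs : ∀ b, q (s b) = q zA)
    (hsemi : ∀ a, addA (k (q a)) (s (p a)) = a)
    {Z : Type} (addZ : Z → Z → Z) (zZ : Z)
    (hZ1 : ∀ z, addZ z zZ = z) (hZ2 : ∀ z, addZ zZ z = z)
    (u : X → Z) (hu0 : u (q zA) = zZ)
    (v : B → Z)
    (hv0 : v zB = zZ) (hvadd : ∀ b b', v (addB b b') = addZ (v b) (v b'))
    : (∃ w : A → Z, w zA = zZ ∧
        (∀ a a', w (addA a a') = addZ (w a) (w a')) ∧
        (∀ x, w (k x) = u x) ∧ (∀ b, w (s b) = v b)) ↔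
      (∀ a a' : A,
        addZ (u (q (addA a a'))) (v (p (addA a a'))) =
        addZ (addZ (u (q a)) (v (p a))) (addZ (u (q a')) (v (p a')))) := by
  constructor
  · rintro ⟨w, hw0, hwadd, hwk, hws⟩ a a'
    have key : ∀ b, w b = addZ (u (q b)) (v (p b)) := fun b => by
      conv_lhs => rw [← hsemi b]
      rw [hwadd, hwk, hws]
    rw [← key, ← key, ← key, hwadd]
  · intro h
    refine ⟨fun a => addZ (u (q a)) (v (p a)), ?_, ?_, ?_, ?_⟩
    · dsimp only; rw [hu0, hp0, hv0, hZ1]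
    · exact h
    · intro x; dsimp only; rw [hqk, hpk, hv0, hZ1]
    · intro b; dsimp only; rw [hqs, hu0, hps, hZ2]
end

section
/- Let (A,k,q,s,p) be a retraction point from X to a unitary magma B, Z a unitary magma and g: Z → B a magma morphism. Form the pullback A ×_B Z = {(a,z) | p(a) = g(z)} with componentwise operation. Then (A ×_B Z, ⟨k,0⟩, q∘π₁, ⟨s∘g, 1⟩, π₂) is a retraction point from X to Z; in particular every (a,z) in the pullback decomposes as (a,z) = (kq(a), 0) + (sg(z), z). -/
theorem stmt10
    {A B X : Type}
    (addA : A → A → A) (zA : A)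
    (addB : B → B → B) (zB : B)
    (hA1 : ∀ a, addA a zA = a) (hA2 : ∀ a, addA zA a = a)
    (hB1 : ∀ b, addB b zB = b) (hB2 : ∀ b, addB zB b = b)
    (p : A → B) (s : B → A) (k : X → A) (q : A → X)
    (hp0 : p zA = zB) (hpadd : ∀ a a', p (addA a a') = addB (p a) (p a'))
    (hs0 : s zB = zA) (hsadd : ∀ b b', s (addB b b') = addA (s b) (s b'))
    (hps : ∀ b, p (s b) = b)
    (hqk : ∀ x, q (k x) = x)
    (hpk : ∀ x, p (k x) = zB)
    (hqs : ∀ b, q (s b) = q zA)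
    (hsemi : ∀ a, addA (k (q a)) (s (p a)) = a)
    {Z : Type} (addZ : Z → Z → Z) (zZ : Z)
    (hZ1 : ∀ z, addZ z zZ = z) (hZ2 : ∀ z, addZ zZ z = z)
    (g : Z → B)
    (hg0 : g zZ = zB) (hgadd : ∀ z z', g (addZ z z') = addB (g z) (g z'))
    : -- the pullback A ×_B Z = {(a,z) | p a = g z} contains the zero
      p zA = g zZ ∧
      -- and is closed under the componentwise operation
      (∀ a z a' z', p a = g z → p a' = g z' →
        p (addA a a') = g (addZ z z')) ∧
      -- ⟨k,0⟩ lands in the pullback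
      (∀ x : X, p (k x) = g zZ) ∧
      -- ⟨s∘g,1⟩ lands in the pullback and splits π₂
      (∀ z : Z, p (s (g z)) = g z) ∧
      -- retraction point identities: q∘π₁ retracts ⟨k,0⟩, q∘π₁ kills ⟨s∘g,1⟩,
      -- π₂ kills ⟨k,0⟩
      (∀ x : X, q (k x) = x) ∧
      (∀ z : Z, q (s (g z)) = q zA) ∧
      -- semibiproduct condition: (a,z) = (k(q a), 0) + (s(g z), z)
      (∀ a z, p a = g z → addA (k (q a)) (s (g z)) = a ∧ addZ zZ z = z) := by
  refine ⟨by rw [hp0, hg0], ?_, ?_, ?_, hqk, fun z => hqs _, ?_⟩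
  · intro a z a' z' h h'
    rw [hpadd, hgadd, h, h']
  · intro x; rw [hpk, hg0]
  · intro z; exact hps _
  · intro a z h
    exact ⟨by rw [← h, hsemi], hZ2 z⟩
end

section
/- (Split short five lemma for retraction points) Let (A,k,q,s,p) and (A',k',q',s',p') be retraction points from X to B. If α: A → A' is a magma morphism with αk = k', αs = s' and q'α = q, then α is an isomorphism, with inverse β(y) = k(q'(y)) + s(p'(y)). -/
theorem stmt12
    {A B X : Type}
    (addA : A → A → A) (zA : A)
    (addB : B → B → B) (zB : B)
    (hA1 : ∀ a, addA a zA = a) (hA2 : ∀ a, addA zA a = a)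
    (hB1 : ∀ b, addB b zB = b) (hB2 : ∀ b, addB zB b = b)
    (p : A → B) (s : B → A) (k : X → A) (q : A → X)
    (hp0 : p zA = zB) (hpadd : ∀ a a', p (addA a a') = addB (p a) (p a'))
    (hs0 : s zB = zA) (hsadd : ∀ b b', s (addB b b') = addA (s b) (s b'))
    (hps : ∀ b, p (s b) = b)
    (hqk : ∀ x, q (k x) = x)
    (hpk : ∀ x, p (k x) = zB)
    (hqs : ∀ b, q (s b) = q zA)
    (hsemi : ∀ a, addA (k (q a)) (s (p a)) = a)
    {A' : Type}
    (addA' : A' → A' → A') (zA' : A')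
    (hA'1 : ∀ a, addA' a zA' = a) (hA'2 : ∀ a, addA' zA' a = a)
    (p' : A' → B) (s' : B → A') (k' : X → A') (q' : A' → X)
    (hp'0 : p' zA' = zB) (hp'add : ∀ a a', p' (addA' a a') = addB (p' a) (p' a'))
    (hs'0 : s' zB = zA') (hs'add : ∀ b b', s' (addB b b') = addA' (s' b) (s' b'))
    (hps' : ∀ b, p' (s' b) = b)
    (hqk' : ∀ x, q' (k' x) = x)
    (hpk' : ∀ x, p' (k' x) = zB)
    (hqs' : ∀ b, q' (s' b) = q' zA')
    (hsemi' : ∀ a, addA' (k' (q' a)) (s' (p' a)) = a)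
    (α : A → A') (hα0 : α zA = zA')
    (hαadd : ∀ a a', α (addA a a') = addA' (α a) (α a'))
    (hαk : ∀ x, α (k x) = k' x) (hαs : ∀ b, α (s b) = s' b)
    (hqα : ∀ a, q' (α a) = q a)
    : (∀ a, addA (k (q' (α a))) (s (p' (α a))) = a) ∧
      (∀ y, α (addA (k (q' y)) (s (p' y))) = y) := by
  have hpα : ∀ a, p' (α a) = p a := by
    intro a
    calc p' (α a) = p' (α (addA (k (q a)) (s (p a)))) := by rw [hsemi]
    _ = addB (p' (k' (q a))) (p' (s' (p a))) := by rw [hαadd, hp'add, hαk, hαs]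
    _ = p a := by rw [hpk', hps', hB2]
  constructor
  · intro a; rw [hqα, hpα, hsemi]
  · intro y
    rw [hαadd, hαk, hαs, hsemi']
end

section
/- Let (X,φ) be a B-action for a unitary magma B. Then the set X ⋊_φ B = {(x,b) ∈ X × B | φ(x,0,0,b) = x} is closed under the operation (x,b)+(x',b') = (φ(x,b,x',b'), b+b'), and (X ⋊_φ B, +, (0,0)) is a unitary magma. -/
theorem stmt14
    {X B : Type}
    (addB : B → B → B) (zB : B)
    (hB1 : ∀ b, addB b zB = b) (hB2 : ∀ b, addB zB b = b)
    (φ : X → B → X → B → X) (zX : X)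
    (act1 : ∀ x, φ x zB zX zB = x ∧ φ zX zB x zB = x)
    (act2 : ∀ x b, φ x b zX zB = φ x zB zX b ∧ φ x zB zX b = φ zX zB x b)
    (act3 : ∀ b b', φ zX b zX b' = zX)
    (act4 : ∀ x b x' b', φ x b x' b' =
      φ (φ (φ x zB zX b) b (φ x' zB zX b') b') zB zX (addB b b'))
    : -- the neutral element (zX, zB) belongs to X ⋊_φ B
      φ zX zB zX zB = zX ∧
      -- closure under the operation (x,b)+(x',b') = (φ x b x' b', b+b')
      (∀ x b x' b', φ x zB zX b = x → φ x' zB zX b' = x' →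
        φ (φ x b x' b') zB zX (addB b b') = φ x b x' b') ∧
      -- (zX,zB) is a two-sided neutral element for members
      (∀ x b, φ x zB zX b = x →
        (φ x b zX zB = x ∧ addB b zB = b) ∧
        (φ zX zB x b = x ∧ addB zB b = b)) := by
  refine ⟨(act1 zX).1, ?_, ?_⟩
  · intro x b x' b' hx hx'
    have h := act4 x b x' b'
    rw [hx, hx'] at h
    exact h.symm
  · intro x b hx
    have h2 := act2 x b
    exact ⟨⟨h2.1.trans hx, hB1 b⟩, (h2.2.symm.trans hx), hB2 b⟩
end

section
/- Every retraction point (A,k,q,s,p) from X to a unitary magma B induces a B-action (X,φ) with φ(x,b,x',b') = q((k(x)+s(b)) + (k(x')+s(b'))), where the element 0 of X is q(0); i.e. this φ satisfies all four axioms of a B-action. -/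
theorem stmt17
    {A B X : Type}
    (addA : A → A → A) (zA : A)
    (addB : B → B → B) (zB : B)
    (hA1 : ∀ a, addA a zA = a) (hA2 : ∀ a, addA zA a = a)
    (hB1 : ∀ b, addB b zB = b) (hB2 : ∀ b, addB zB b = b)
    (p : A → B) (s : B → A) (k : X → A) (q : A → X)
    (hp0 : p zA = zB) (hpadd : ∀ a a', p (addA a a') = addB (p a) (p a'))
    (hs0 : s zB = zA) (hsadd : ∀ b b', s (addB b b') = addA (s b) (s b'))
    (hps : ∀ b, p (s b) = b)
    (hqk : ∀ x, q (k x) = x)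
    (hpk : ∀ x, p (k x) = zB)
    (hqs : ∀ b, q (s b) = q zA)
    (hsemi : ∀ a, addA (k (q a)) (s (p a)) = a)
    : -- φ(x,b,x',b') = q((k x + s b) + (k x' + s b')) is a B-action with 0_X = q zA
      (∀ x, q (addA (addA (k x) (s zB)) (addA (k (q zA)) (s zB))) = x ∧
            q (addA (addA (k (q zA)) (s zB)) (addA (k x) (s zB))) = x) ∧
      (∀ x b,
        q (addA (addA (k x) (s b)) (addA (k (q zA)) (s zB))) =
          q (addA (addA (k x) (s zB)) (addA (k (q zA)) (s b))) ∧
        q (addA (addA (k x) (s zB)) (addA (k (q zA)) (s b))) =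
          q (addA (addA (k (q zA)) (s zB)) (addA (k x) (s b)))) ∧
      (∀ b b', q (addA (addA (k (q zA)) (s b)) (addA (k (q zA)) (s b'))) = q zA) ∧
      (∀ x b x' b',
        q (addA (addA (k x) (s b)) (addA (k x') (s b'))) =
        q (addA (addA (k (q (addA (addA
              (k (q (addA (addA (k x) (s zB)) (addA (k (q zA)) (s b))))) (s b))
          (addA
              (k (q (addA (addA (k x') (s zB)) (addA (k (q zA)) (s b'))))) (s b')))))
            (s (addB b b')))
          (addA (k (q zA)) (s zB)))) := by
  have hkz : k (q zA) = zA := by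
    have := hsemi zA
    rw [hp0, hs0, hA1] at this
    exact this
  have hsb : ∀ x b, addA (addA (k x) (s zB)) (addA (k (q zA)) (s b)) = addA (k x) (s b) := by
    intro x b
    rw [hs0, hA1, hkz, hA2]
  have hpsum : ∀ x b, p (addA (k x) (s b)) = b := by
    intro x b
    rw [hpadd, hpk, hps, hB2]
  have hrec : ∀ x b, addA (k (q (addA (k x) (s b)))) (s b) = addA (k x) (s b) := by
    intro x b
    have := hsemi (addA (k x) (s b))
    rwa [hpsum] at this
  refine ⟨?_, ?_, ?_, ?_⟩
  · intro x
    constructor <;> simp [hs0, hkz, hA1, hA2, hqk]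
  · intro x b
    refine ⟨?_, ?_⟩
    · rw [hsb, hs0, hkz, hA1, hA1]
    · rw [hsb, hs0, hkz, hA1, hA2]
  · intro b b'
    rw [hkz, hA2, hA2, ← hsadd, hqs]
  · intro x b x' b'
    rw [hsb, hsb, hrec, hrec]
    set a := addA (addA (k x) (s b)) (addA (k x') (s b')) with ha
    have hpa : p a = addB b b' := by rw [ha, hpadd, hpsum, hpsum]
    have : addA (k (q a)) (s (addB b b')) = a := by rw [← hpa]; exact hsemi a
    rw [this, hs0, hkz, hA1, hA1]
end
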